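/- arXiv:1610.05242 — 3 statements merged into one kernel-verified Lean document; each statement's English description precedes it below -/
import Mathlib

section
/- Let F be a field, V a finite-dimensional F-vector space, F'/F a field extension, and W ⊆ V ⊗_F F' a line whose Aut(F'/F)-conjugates span V ⊗_F F'. Then the stabilizer K of W in End_F(V) is a field extension of F (with F embedded as scalar multiples of the identity), and via the induced K-module structure on V one has [K : F] ≤ dim_F V. -/
/-!
Restricting `φ ⊗ 1` to the line `W` gives a ring homomorphism from the stabilizer `K` to
`End(W) ≅ F'`, sending `φ` to its eigenvalue on `W`. It is injective: if `φ ⊗ 1` kills `W`, it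
kills every conjugate `(σ ⊗ 1)(W)` because it commutes with `σ ⊗ 1`, hence kills their span
`F' ⊗ V`, and `φ = 0` by faithful flatness. Thus `K` is a finite-dimensional `F`-algebra embedded
in a field, so it is a field, and evaluation at a nonzero vector embeds `K` into `V`.
-/

open TensorProduct

namespace Submodule

section Stabilizer

variable {R A M : Type*} [CommSemiring R] [CommSemiring A] [Algebra R A]
  [AddCommMonoid M] [Module R M]

def baseChangeStabilizer (W : Submodule A (A ⊗[R] M)) : Subalgebra R (Module.End R M) where
  carrier := {φ | ∀ x ∈ W, φ.baseChange A x ∈ W}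
  mul_mem' {φ ψ} hφ hψ x hx := by
    rw [LinearMap.baseChange_mul]
    exact hφ _ (hψ x hx)
  add_mem' {φ ψ} hφ hψ x hx := by
    rw [LinearMap.baseChange_add]
    exact W.add_mem (hφ x hx) (hψ x hx)
  algebraMap_mem' r x hx := by
    change Module.End.baseChangeHom R A M (algebraMap R _ r) x ∈ W
    rw [AlgHom.commutes, Module.algebraMap_end_apply]
    exact W.smul_of_tower_mem r hx

def baseChangeStabilizer.restrictHom (W : Submodule A (A ⊗[R] M)) :
    W.baseChangeStabilizer →+* Module.End A W where
  toFun φ := (φ.1.baseChange A).restrict φ.2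
  map_one' := by ext; simp
  map_mul' φ ψ := by ext; simp [LinearMap.baseChange_mul, LinearMap.restrict_apply]; rfl
  map_zero' := by ext; simp
  map_add' φ ψ := by ext; simp [LinearMap.baseChange_add, LinearMap.restrict_apply]; rfl

end Stabilizer

end Submodule

lemma LinearMap.baseChange_rTensor_comm {R A M N : Type*} [CommSemiring R] [CommSemiring A]
    [Algebra R A] [AddCommMonoid M] [Module R M] [AddCommMonoid N] [Module R N]
    (φ : M →ₗ[R] N) (σ : A →ₗ[R] A) (x : A ⊗[R] M) :
    φ.baseChange A (σ.rTensor M x) = σ.rTensor N (φ.baseChange A x) := by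
  rw [LinearMap.baseChange_eq_ltensor, ← LinearMap.comp_apply, LinearMap.lTensor_comp_rTensor,
    ← LinearMap.rTensor_comp_lTensor, LinearMap.comp_apply]

lemma LinearMap.eq_zero_of_le_ker_baseChange {R A M N : Type*} [CommRing R] [CommRing A]
    [Algebra R A] [Module.FaithfullyFlat R A] [AddCommGroup M] [Module R M] [AddCommGroup N]
    [Module R N] {W : Submodule A (A ⊗[R] M)}
    (hspan : Submodule.span A (⋃ σ : A ≃ₐ[R] A, σ.toLinearMap.rTensor M '' W) = ⊤)
    {φ : M →ₗ[R] N} (hφ : W ≤ LinearMap.ker (φ.baseChange A)) : φ = 0 := by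
  have hconj : ∀ σ : A ≃ₐ[R] A,
      σ.toLinearMap.rTensor M '' W ⊆ LinearMap.ker (φ.baseChange A) := by
    rintro σ _ ⟨w, hw, rfl⟩
    rw [SetLike.mem_coe, LinearMap.mem_ker, LinearMap.baseChange_rTensor_comm, hφ hw, map_zero]
  have hker : LinearMap.ker (φ.baseChange A) = ⊤ :=
    top_le_iff.mp (hspan ▸ Submodule.span_le.mpr (Set.iUnion_subset hconj))
  refine (Module.FaithfullyFlat.zero_iff_lTensor_zero R A φ).mpr <| LinearMap.ext fun x ↦ ?_
  have hx : x ∈ LinearMap.ker (φ.baseChange A) := hker ▸ Submodule.mem_top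
  exact LinearMap.mem_ker.mp hx

lemma Submodule.baseChangeStabilizer.restrictHom_injective {R A M : Type*} [CommRing R]
    [CommRing A] [Algebra R A] [Module.FaithfullyFlat R A] [AddCommGroup M] [Module R M]
    {W : Submodule A (A ⊗[R] M)}
    (hspan : Submodule.span A (⋃ σ : A ≃ₐ[R] A, σ.toLinearMap.rTensor M '' W) = ⊤) :
    Function.Injective (restrictHom W) :=
  (injective_iff_map_eq_zero _).mpr fun _ hφ ↦ Subtype.ext <|
    LinearMap.eq_zero_of_le_ker_baseChange hspan fun x hx ↦
      congr_arg Subtype.val (LinearMap.congr_fun hφ ⟨x, hx⟩)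

lemma Module.End.algebraMap_bijective_of_finrank_eq_one {K V : Type*} [Field K]
    [AddCommGroup V] [Module K V] (h : Module.finrank K V = 1) :
    Function.Bijective (algebraMap K (Module.End K V)) := by
  have : Nontrivial V := Module.nontrivial_of_finrank_eq_succ h
  refine ⟨(algebraMap K _).injective, fun u ↦ ?_⟩
  obtain ⟨c, hc, -⟩ := u.existsUnique_eq_smul_id_of_finrank_eq_one h
  exact ⟨c, by rw [hc, Algebra.algebraMap_eq_smul_one]; rfl⟩

lemma isField_of_injective_of_finiteDimensional (F : Type*) {A L : Type*} [Field F] [Ring A]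
    [Algebra F A] [FiniteDimensional F A] [CommRing L] [IsDomain L] (f : A →+* L)
    (hf : Function.Injective f) : IsField A := by
  have := hf.isDomain f
  exact ⟨exists_pair_ne A, fun a b ↦ hf (by rw [map_mul, map_mul, mul_comm]),
    FiniteDimensional.exists_mul_eq_one F⟩

lemma Subalgebra.finrank_le_of_isField {F V : Type*} [Field F] [AddCommGroup V] [Module F V]
    [FiniteDimensional F V] {K : Subalgebra F (Module.End F V)} (hK : IsField K) :
    Module.finrank F K ≤ Module.finrank F V := by
  have : Nontrivial V := by
    by_contra hV
    have := not_nontrivial_iff_subsingleton.mp hV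
    obtain ⟨a, b, hab⟩ := hK.exists_pair_ne
    exact hab (Subtype.ext (Subsingleton.elim _ _))
  obtain ⟨v, hv⟩ := exists_ne (0 : V)
  let eval : K →ₗ[F] V := (LinearMap.applyₗ v).comp K.val.toLinearMap
  refine LinearMap.finrank_le_finrank_of_injective (f := eval) <|
    (injective_iff_map_eq_zero eval).mpr fun φ hφ ↦ ?_
  by_contra hne
  obtain ⟨ψ, hψ⟩ := hK.mul_inv_cancel hne
  have hv' : (ψ * φ : K).1 v = v := by rw [hK.mul_comm, hψ]; rfl
  exact hv (by simpa [show φ.1 v = 0 from hφ] using hv'.symm)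

/-- The stabilizer `K` of such a line `W` in `End_F(V)` is a field extension
of `F` (an `F`-subalgebra, so `F` sits inside as scalars), and `[K : F] ≤ dim_F V`. -/
theorem stabilizer_isField_finrank_le
    (F F' : Type*) [Field F] [Field F'] [Algebra F F']
    (V : Type*) [AddCommGroup V] [Module F V] [FiniteDimensional F V]
    (W : Submodule F' (F' ⊗[F] V))
    (hW : Module.finrank F' ↥W = 1)
    (hspan : Submodule.span F'
      (⋃ σ : F' ≃ₐ[F] F',
        (LinearMap.rTensor V σ.toLinearMap) '' (W : Set (F' ⊗[F] V))) = ⊤) :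
    ∃ K : Subalgebra F (Module.End F V),
      ((K : Set (Module.End F V)) =
        {φ : Module.End F V | ∀ x ∈ W, LinearMap.baseChange F' φ x ∈ W}) ∧
      IsField ↥K ∧
      Module.finrank F ↥K ≤ Module.finrank F V := by
  let eigenvalue := (RingEquiv.ofBijective _
    (Module.End.algebraMap_bijective_of_finrank_eq_one (V := W) hW)).symm
  have hK : IsField W.baseChangeStabilizer :=
    isField_of_injective_of_finiteDimensional F
      (eigenvalue.toRingHom.comp (Submodule.baseChangeStabilizer.restrictHom W))
      (eigenvalue.injective.comp (Submodule.baseChangeStabilizer.restrictHom_injective hspan))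
  exact ⟨W.baseChangeStabilizer, rfl, hK, Subalgebra.finrank_le_of_isField hK⟩
end

section
/- Let F be a field of characteristic zero, V an n-dimensional vector space over F, F'/F a field extension, and W ⊆ V ⊗_F F' a line whose Aut(F'/F)-conjugates span V ⊗_F F'. If the stabilizer K of W in End_F(V) equals F(W) (via the eigenvalue embedding), then [F(W) : F] = n. -/
open TensorProduct

/-- `W` is defined over the intermediate field `M` of `F'/F`. -/
def IsDefinedOver (F F' : Type*) [Field F] [Field F'] [Algebra F F']
    (V : Type*) [AddCommGroup V] [Module F V]
    (M : IntermediateField F F') (W : Submodule F' (F' ⊗[F] V)) : Prop :=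
  ∃ w : ↥M ⊗[F] V,
    W = Submodule.span F' {LinearMap.rTensor V M.val.toLinearMap w}


section AuxDegStab
open TensorProduct
variable {F F' : Type*} [Field F] [Field F'] [Algebra F F']
  {V : Type*} [AddCommGroup V] [Module F V] [FiniteDimensional F V]

omit [FiniteDimensional F V] in
lemma baseChange_rTensor_comm' (φ : Module.End F V) (σ : F' ≃ₐ[F] F') (z : F' ⊗[F] V) :
    LinearMap.baseChange F' φ (LinearMap.rTensor V σ.toLinearMap z)
      = LinearMap.rTensor V σ.toLinearMap (LinearMap.baseChange F' φ z) := by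
  induction z with
  | zero => simp
  | tmul a v => simp
  | add x y hx hy => simp [hx, hy]

lemma one_tmul_inj' {v : V} (h : (1 : F') ⊗ₜ[F] v = 0) : v = 0 := by
  have h1 : Function.Injective (LinearMap.rTensor V (Algebra.linearMap F F')) :=
    Module.Flat.rTensor_preserves_injective_linearMap _ (algebraMap F F').injective
  have h2 : LinearMap.rTensor V (Algebra.linearMap F F') ((1:F) ⊗ₜ[F] v) = (1:F') ⊗ₜ[F] v := by
    simp
  have := h1 (a₁ := (1:F) ⊗ₜ[F] v) (a₂ := 0) (by rw [h2, map_zero, h])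
  simpa using congrArg (TensorProduct.lid F V) this

omit [FiniteDimensional F V] in
lemma rTensor_smul'' (σ : F' ≃ₐ[F] F') (a : F') (z : F' ⊗[F] V) :
    LinearMap.rTensor V σ.toLinearMap (a • z) = σ a • LinearMap.rTensor V σ.toLinearMap z := by
  induction z with
  | zero => simp
  | tmul b v => simp [smul_tmul', smul_eq_mul]
  | add x y hx hy => simp [smul_add, hx, hy]
end AuxDegStab

set_option maxHeartbeats 1000000 in
/-- `F` characteristic zero, `V` `n`-dimensional, `W ⊆ F' ⊗ V` a line whose
`Aut(F'/F)`-conjugates span `F' ⊗ V`.  If the stabilizer `K` of `W` in `End_F(V)` equals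
the field of definition `F(W) = M` via the eigenvalue embedding (every `φ ∈ K` has its
eigenvalue on `W` in `M`, and every element of `M` is such an eigenvalue), then
`[F(W) : F] = n`. -/
theorem degree_of_stabilizer_eq_fieldOfDefinition
    (F F' : Type*) [Field F] [CharZero F] [Field F'] [Algebra F F']
    (V : Type*) [AddCommGroup V] [Module F V] [FiniteDimensional F V]
    (n : ℕ) (hV : Module.finrank F V = n)
    (W : Submodule F' (F' ⊗[F] V))
    (hW : Module.finrank F' ↥W = 1)
    (hspan : Submodule.span F'
      (⋃ σ : F' ≃ₐ[F] F',
        (LinearMap.rTensor V σ.toLinearMap) '' (W : Set (F' ⊗[F] V))) = ⊤)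
    (M : IntermediateField F F')
    (hdef : IsDefinedOver F F' V M W)
    (hmin : ∀ M' : IntermediateField F F', IsDefinedOver F F' V M' W → M ≤ M')
    (heigen : ∀ φ : Module.End F V, (∀ x ∈ W, LinearMap.baseChange F' φ x ∈ W) →
      ∃ c : F', c ∈ M ∧ ∀ x ∈ W, LinearMap.baseChange F' φ x = c • x)
    (hsurj : ∀ c : F', c ∈ M →
      ∃ φ : Module.End F V, (∀ x ∈ W, LinearMap.baseChange F' φ x ∈ W) ∧
        ∀ x ∈ W, LinearMap.baseChange F' φ x = c • x) :
    Module.finrank F ↥M = n := by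
  classical
  obtain ⟨w, hwspan⟩ := hdef
  -- ambient dimension
  have hn' : Module.finrank F' (F' ⊗[F] V) = n := by
    rw [Module.finrank_baseChange, hV]
  have hn1 : 1 ≤ n := by
    rw [← hn', ← hW]; exact Submodule.finrank_le W
  have hVnt : Nontrivial V := by
    have : 0 < Module.finrank F V := by omega
    exact Module.nontrivial_of_finrank_pos this
  -- injectivity of the action on W
  have hinj : ∀ φ : Module.End F V, (∀ x ∈ W, LinearMap.baseChange F' φ x = 0) → φ = 0 := by
    intro φ h
    have hker : Submodule.span F'
        (⋃ σ : F' ≃ₐ[F] F',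
          (LinearMap.rTensor V σ.toLinearMap) '' (W : Set (F' ⊗[F] V)))
        ≤ LinearMap.ker (LinearMap.baseChange F' φ) := by
      rw [Submodule.span_le]
      rintro z hz
      obtain ⟨s, ⟨σ, rfl⟩, x, hxW, rfl⟩ := hz
      simp only [SetLike.mem_coe, LinearMap.mem_ker]
      rw [baseChange_rTensor_comm', h x hxW, map_zero]
    rw [hspan, top_le_iff] at hker
    have hbc : LinearMap.baseChange F' φ = 0 := LinearMap.ker_eq_top.mp hker
    ext v
    have : (1 : F') ⊗ₜ[F] (φ v) = 0 := by
      have := congrArg (fun f => f ((1:F') ⊗ₜ[F] v)) hbc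
      simpa using this
    simpa using one_tmul_inj' this
  have key : ∀ (c : F') (φ ψ : Module.End F V),
      (∀ x ∈ W, LinearMap.baseChange F' φ x = c • x) →
      (∀ x ∈ W, LinearMap.baseChange F' ψ x = c • x) → φ = ψ := by
    intro c φ ψ hφ hψ
    have := hinj (φ - ψ) (fun x hx => by
      rw [LinearMap.baseChange_sub, LinearMap.sub_apply, hφ x hx, hψ x hx, sub_self])
    exact sub_eq_zero.mp this
  choose φof hst hev using fun (c : ↥M) => hsurj (c : F') c.2
  -- the algebra hom
  let g : ↥M →ₐ[F] Module.End F V :=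
  { toFun := φof
    map_one' := key 1 _ _ (by simpa using hev 1) (fun x hx => by
      simp [Module.End.one_eq_id])
    map_mul' := fun c c' => key ((c : F') * (c' : F')) _ _
      (by simpa using hev (c * c')) (fun x hx => by
        rw [Module.End.mul_eq_comp, LinearMap.baseChange_comp, LinearMap.comp_apply,
          hev c' x hx, map_smul, hev c x hx, smul_smul, mul_comm])
    map_zero' := key 0 _ _ (by simpa using hev 0) (fun x hx => by simp)
    map_add' := fun c c' => key ((c : F') + (c' : F')) _ _
      (by simpa using hev (c + c')) (fun x hx => by
        rw [LinearMap.baseChange_add, LinearMap.add_apply, hev c x hx, hev c' x hx, add_smul])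
    commutes' := fun a => key (algebraMap F F' a) _ _
      (by simpa using hev (algebraMap F ↥M a)) (fun x hx => by
        simp [Algebra.algebraMap_eq_smul_one, LinearMap.baseChange_smul,
          Module.End.one_eq_id, algebraMap_smul]) }
  -- module structure on V over M
  letI : Module ↥M V := Module.compHom V g.toRingHom
  have hsmul : ∀ (c : ↥M) (v : V), c • v = g c v := fun _ _ => rfl
  letI : IsScalarTower F ↥M V := ⟨fun a c v => by
    rw [hsmul, hsmul, map_smul, LinearMap.smul_apply]⟩
  letI : Module.Finite ↥M V := Module.Finite.of_restrictScalars_finite F ↥M V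
  have hdim : Module.finrank F ↥M * Module.finrank ↥M V = n := by
    rw [Module.finrank_mul_finrank, hV]
  have hpos : 0 < Module.finrank ↥M V := Module.finrank_pos
  have hle : Module.finrank F ↥M ≤ n := by
    calc Module.finrank F ↥M = Module.finrank F ↥M * 1 := (mul_one _).symm
    _ ≤ Module.finrank F ↥M * Module.finrank ↥M V := by
        exact Nat.mul_le_mul_left _ hpos
    _ = n := hdim
  -- lower bound
  have hMfin : FiniteDimensional F ↥M := by
    have hginj : Function.Injective g := g.toRingHom.injective
    exact FiniteDimensional.of_injective g.toLinearMap hginj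
  have hfinHom : Finite (↥M →ₐ[F] F') := by
    have h := cardinalMk_algHom F ↥M F'
    rw [← Cardinal.lt_aleph0_iff_finite]
    exact lt_of_le_of_lt h (Cardinal.nat_lt_aleph0 _)
  letI : Fintype (↥M →ₐ[F] F') := Fintype.ofFinite _
  have hcard : Fintype.card (↥M →ₐ[F] F') ≤ Module.finrank F ↥M := by
    have h := cardinalMk_algHom F ↥M F'
    rw [Cardinal.mk_fintype] at h
    rw [Module.finrank_linearMap_self F F' ↥M] at h
    exact_mod_cast h
  set v : (↥M →ₐ[F] F') → F' ⊗[F] V := fun τ => LinearMap.rTensor V τ.toLinearMap w with hv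
  have htop : Submodule.span F' (Set.range v) = ⊤ := by
    rw [← top_le_iff, ← hspan, Submodule.span_le]
    rintro z hz
    obtain ⟨s, ⟨σ, rfl⟩, x, hxW, rfl⟩ := hz
    rw [hwspan] at hxW
    obtain ⟨a, rfl⟩ := Submodule.mem_span_singleton.mp hxW
    rw [rTensor_smul'']
    apply Submodule.smul_mem
    have : LinearMap.rTensor V σ.toLinearMap (LinearMap.rTensor V M.val.toLinearMap w)
        = v ((σ : F' →ₐ[F] F').comp M.val) := by
      rw [hv]
      rw [← LinearMap.comp_apply, ← LinearMap.rTensor_comp]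
      rfl
    rw [this]
    exact Submodule.subset_span (Set.mem_range_self _)
  have hge : n ≤ Module.finrank F ↥M := by
    calc n = Module.finrank F' (F' ⊗[F] V) := hn'.symm
    _ = Module.finrank F' (Submodule.span F' (Set.range v)) := by rw [htop, finrank_top]
    _ ≤ Fintype.card (↥M →ₐ[F] F') := finrank_range_le_card v
    _ ≤ Module.finrank F ↥M := hcard
  omega
end

section
/- Let F be a field of characteristic zero, V an n-dimensional F-vector space, F'/F a field extension, and W ⊆ V ⊗_F F' a line whose conjugates under Aut(F'/F) span V ⊗_F F'. If [F(W) : F] = n, then the stabilizer K of W in End_F(V) satisfies [K : F] = n, i.e., V admits a structure of one-dimensional F(W)-vector space under which W is stabilized. -/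
open TensorProduct

/-!
Write the defining vector as `x = ∑ mᵢ ⊗ vᵢ` with `mᵢ ∈ F(W)`. Contracting against the dual,
`f ↦ ∑ f(vᵢ) mᵢ`, is an `F`-linear map `e : V* → F(W)`; it is injective because a functional
killing `x` kills every conjugate of `x`, and these span. By the degree hypothesis `e` is an
isomorphism. Now `φ ∈ End_F(V)` scales `x` by `c` exactly when `e ∘ φᵀ = c · e`, so the stabilizer
is the image of `F(W)` under `c ↦ (e⁻¹ ∘ (c ·) ∘ e)ᵀ`, an injective algebra map: transposition
reverses products, which does not matter since `F(W)` is commutative.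
-/

open Module

theorem Submodule.forall_map_mem_span_singleton_iff {R N : Type*} [Semiring R] [AddCommMonoid N]
    [Module R N] (g : N →ₗ[R] N) (x : N) :
    (∀ y ∈ R ∙ x, g y ∈ R ∙ x) ↔ ∃ c : R, g x = c • x := by
  refine ⟨fun h ↦ (mem_span_singleton.mp (h x (mem_span_singleton_self x))).imp
    fun c hc ↦ hc.symm, ?_⟩
  rintro ⟨c, hc⟩ y hy
  obtain ⟨d, rfl⟩ := mem_span_singleton.mp hy
  rw [map_smul, hc]
  exact smul_mem _ _ (smul_mem _ _ (mem_span_singleton_self x))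

section TransposedRegular

variable {F M V : Type*} [Field F] [CommRing M] [Algebra F M]
  [AddCommGroup V] [Module F V] [FiniteDimensional F V]

theorem LinearMap.ext_of_forall_dual_comp {φ ψ : Module.End F V}
    (h : ∀ f : Dual F V, f ∘ₗ φ = f ∘ₗ ψ) : φ = ψ :=
  LinearMap.ext fun v ↦ (evalEquiv F V).injective <| LinearMap.ext fun f ↦ congr($(h f) v)

theorem dual_comp_conj_transpose (T : Module.End F (Dual F V)) (f : Dual F V) :
    f ∘ₗ (evalEquiv F V).symm.conj (Dual.transpose T) = T f := by
  ext v; simp [LinearEquiv.conj_apply, Dual.transpose_apply]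

variable (e : Dual F V ≃ₗ[F] M)

noncomputable def transposedRegularₗ : M →ₗ[F] Module.End F V :=
  (evalEquiv F V).symm.conj.toLinearMap ∘ₗ Dual.transpose ∘ₗ e.symm.conj.toLinearMap ∘ₗ
    (Algebra.lmul F M).toLinearMap

theorem apply_dual_comp_transposedRegularₗ (c : M) (f : Dual F V) :
    e (f ∘ₗ transposedRegularₗ e c) = c * e f := by
  rw [transposedRegularₗ, LinearMap.comp_apply, LinearMap.comp_apply, LinearMap.comp_apply,
    LinearEquiv.coe_coe, dual_comp_conj_transpose]
  simp [LinearEquiv.conj_apply]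

theorem eq_transposedRegularₗ_iff (φ : Module.End F V) (c : M) :
    φ = transposedRegularₗ e c ↔ ∀ f, e (f ∘ₗ φ) = c * e f := by
  refine ⟨by rintro rfl; exact apply_dual_comp_transposedRegularₗ e c, fun h ↦ ?_⟩
  refine LinearMap.ext_of_forall_dual_comp fun f ↦ e.injective ?_
  rw [h, apply_dual_comp_transposedRegularₗ]

noncomputable def transposedRegular : M →ₐ[F] Module.End F V :=
  AlgHom.ofLinearMap (transposedRegularₗ e)
    ((eq_transposedRegularₗ_iff e 1 1).mpr fun f ↦ by rw [one_mul]; rfl).symm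
    (fun c d ↦ ((eq_transposedRegularₗ_iff e _ _).mpr fun f ↦ by
      rw [Module.End.mul_eq_comp, ← LinearMap.comp_assoc, apply_dual_comp_transposedRegularₗ,
        apply_dual_comp_transposedRegularₗ, mul_left_comm, mul_assoc]).symm)

theorem mem_range_transposedRegular_iff (φ : Module.End F V) :
    φ ∈ (transposedRegular e).range ↔ ∃ c, ∀ f, e (f ∘ₗ φ) = c * e f := by
  simp only [AlgHom.mem_range, eq_comm (b := φ)]
  exact exists_congr fun c ↦ eq_transposedRegularₗ_iff e φ c

theorem transposedRegular_injective : Function.Injective (transposedRegular e) := by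
  refine (injective_iff_map_eq_zero _).mpr fun c hc ↦ ?_
  have := (eq_transposedRegularₗ_iff e 0 c).mp hc.symm (e.symm 1)
  simpa using this.symm

end TransposedRegular

section DualContraction

variable {F F' V : Type*} [Field F] [Field F'] [Algebra F F'] [AddCommGroup V] [Module F V]

variable (F) in
noncomputable def dualContraction (x : F' ⊗[F] V) : Dual F V →ₗ[F] F' :=
  (LinearMap.applyₗ x).restrictScalars F ∘ₗ Dual.baseChange F'

@[simp]
theorem dualContraction_apply (x : F' ⊗[F] V) (f : Dual F V) :
    dualContraction F x f = f.baseChange F' x :=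
  rfl

theorem dualContraction_smul (c : F') (x : F' ⊗[F] V) (f : Dual F V) :
    dualContraction F (c • x) f = c * dualContraction F x f := by
  simp

theorem dualContraction_baseChange (φ : Module.End F V) (x : F' ⊗[F] V) (f : Dual F V) :
    dualContraction F (φ.baseChange F' x) f = dualContraction F x (f ∘ₗ φ) := by
  induction x using TensorProduct.induction_on with
  | zero => simp
  | tmul a v => simp
  | add x y hx hy => simp_all

theorem dualContraction_rTensor_algEquiv (σ : F' ≃ₐ[F] F') (x : F' ⊗[F] V) (f : Dual F V) :
    dualContraction F (σ.toLinearMap.rTensor V x) f = σ (dualContraction F x f) := by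
  induction x using TensorProduct.induction_on with
  | zero => simp
  | tmul a v => simp
  | add x y hx hy => simp_all

theorem rTensor_algEquiv_smul (σ : F' ≃ₐ[F] F') (d : F') (x : F' ⊗[F] V) :
    σ.toLinearMap.rTensor V (d • x) = σ d • σ.toLinearMap.rTensor V x := by
  induction x using TensorProduct.induction_on with
  | zero => simp
  | tmul a v => simp [smul_tmul']
  | add x y hx hy => simp_all

theorem dualContraction_rTensor_val_mem (M : IntermediateField F F') (w : M ⊗[F] V)
    (f : Dual F V) : dualContraction F (M.val.toLinearMap.rTensor V w) f ∈ M := by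
  induction w using TensorProduct.induction_on with
  | zero => simp
  | tmul m v => simpa using M.smul_mem m.2
  | add x y hx hy => simpa using M.add_mem hx hy

theorem eq_of_dualContraction_eq [FiniteDimensional F V] {x y : F' ⊗[F] V}
    (h : dualContraction F x = dualContraction F y) : x = y := by
  let b := Module.finBasis F V
  have repr_eq (z : F' ⊗[F] V) (i) :
      (b.baseChange F').repr z i = dualContraction F z (b.coord i) := by
    induction z using TensorProduct.induction_on with
    | zero => simp
    | tmul a v => simp [Basis.baseChange_repr_tmul]
    | add z z' hz hz' => simp_all
  exact (b.baseChange F').ext_elem fun i ↦ by rw [repr_eq, repr_eq, h]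

theorem span_range_rTensor_algEquiv_eq_top {W : Submodule F' (F' ⊗[F] V)} {x : F' ⊗[F] V}
    (hWx : W = F' ∙ x)
    (hspan : Submodule.span F' (⋃ σ : F' ≃ₐ[F] F', σ.toLinearMap.rTensor V '' (W : Set _)) = ⊤) :
    Submodule.span F' (Set.range fun σ : F' ≃ₐ[F] F' ↦ σ.toLinearMap.rTensor V x) = ⊤ := by
  refine top_le_iff.mp (hspan ▸ Submodule.span_le.mpr ?_)
  rintro _ ⟨_, ⟨σ, rfl⟩, y, hy, rfl⟩
  obtain ⟨d, rfl⟩ := Submodule.mem_span_singleton.mp (hWx ▸ hy)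
  rw [SetLike.mem_coe, rTensor_algEquiv_smul]
  exact Submodule.smul_mem _ _ (Submodule.subset_span ⟨σ, rfl⟩)

theorem dualContraction_injective {x : F' ⊗[F] V}
    (hx : Submodule.span F' (Set.range fun σ : F' ≃ₐ[F] F' ↦ σ.toLinearMap.rTensor V x) = ⊤) :
    Function.Injective (dualContraction F x) := by
  refine (injective_iff_map_eq_zero _).mpr fun f hf ↦ ?_
  have hf' : f.baseChange F' = 0 := LinearMap.ext_on_range hx fun σ ↦ by
    rw [LinearMap.zero_apply, ← dualContraction_apply, dualContraction_rTensor_algEquiv, hf,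
      map_zero]
  ext v
  simpa using congr($hf' (1 ⊗ₜ v))

theorem baseChange_eq_smul_iff [FiniteDimensional F V] (φ : Module.End F V) (x : F' ⊗[F] V)
    (c : F') : φ.baseChange F' x = c • x ↔
      ∀ f, dualContraction F x (f ∘ₗ φ) = c * dualContraction F x f := by
  refine ⟨fun h f ↦ ?_, fun h ↦ eq_of_dualContraction_eq (LinearMap.ext fun f ↦ ?_)⟩
  · rw [← dualContraction_baseChange, h, dualContraction_smul]
  · rw [dualContraction_baseChange, h, dualContraction_smul]

end DualContraction

section FieldOfDefinition

variable {F F' V : Type*} [Field F] [Field F'] [Algebra F F'] [AddCommGroup V] [Module F V]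
  [FiniteDimensional F V] {M : IntermediateField F F'} {x : F' ⊗[F] V}

theorem exists_linearEquiv_dualContraction [FiniteDimensional F M]
    (hinj : Function.Injective (dualContraction F x)) (hmem : ∀ f, dualContraction F x f ∈ M)
    (hdim : finrank F V = finrank F M) :
    ∃ e : Dual F V ≃ₗ[F] M, ∀ f, (e f : F') = dualContraction F x f := by
  let Φ : Dual F V →ₗ[F] M := (dualContraction F x).codRestrict M.toSubalgebra.toSubmodule hmem
  have hΦ : Function.Injective Φ := fun f g h ↦ hinj congr(($h : F'))
  have hdim' : finrank F (Dual F V) = finrank F M := Subspace.dual_finrank_eq.trans hdim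
  have hΦ' := (LinearMap.injective_iff_surjective_of_finrank_eq_finrank hdim').mp hΦ
  exact ⟨.ofBijective Φ ⟨hΦ, hΦ'⟩, fun f ↦ rfl⟩

theorem exists_baseChange_eq_smul_iff_mem_range_transposedRegular (e : Dual F V ≃ₗ[F] M)
    (he : ∀ f, (e f : F') = dualContraction F x f) (φ : Module.End F V) :
    (∃ c : F', φ.baseChange F' x = c • x) ↔ φ ∈ (transposedRegular e).range := by
  simp_rw [baseChange_eq_smul_iff, ← he, mem_range_transposedRegular_iff]
  constructor
  · rintro ⟨c, h⟩
    -- `c = c * e (e.symm 1)` is a value of `e`, hence lies in `M`.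
    have hc : (e (e.symm 1 ∘ₗ φ) : F') = c := by simpa using h (e.symm 1)
    exact ⟨_, fun f ↦ Subtype.ext (by rw [h f, MulMemClass.coe_mul, hc])⟩
  · rintro ⟨c, h⟩
    exact ⟨c, fun f ↦ by rw [h f, MulMemClass.coe_mul]⟩

end FieldOfDefinition

theorem stabilizer_degree_of_fieldOfDefinition_degree_general
    (F F' : Type*) [Field F] [Field F'] [Algebra F F']
    (V : Type*) [AddCommGroup V] [Module F V] [FiniteDimensional F V]
    (n : ℕ) (hV : Module.finrank F V = n)
    (W : Submodule F' (F' ⊗[F] V))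
    (hW : Module.finrank F' ↥W = 1)
    (hspan : Submodule.span F'
      (⋃ σ : F' ≃ₐ[F] F',
        (LinearMap.rTensor V σ.toLinearMap) '' (W : Set (F' ⊗[F] V))) = ⊤)
    (M : IntermediateField F F')
    (hdef : IsDefinedOver F F' V M W)
    (hMn : Module.finrank F ↥M = n)
    (K : Subalgebra F (Module.End F V))
    (hK : (K : Set (Module.End F V)) =
      {φ : Module.End F V | ∀ x ∈ W, LinearMap.baseChange F' φ x ∈ W}) :
    Module.finrank F ↥K = n ∧
    ∃ ρ : ↥M →ₐ[F] Module.End F V,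
      Function.Injective ρ ∧
      ∀ m : ↥M, ∀ x ∈ W, LinearMap.baseChange F' (ρ m) x ∈ W := by
  obtain ⟨w, hWx⟩ := hdef
  have : FiniteDimensional F M := Module.finite_of_finrank_pos <| by
    have hWle := W.finrank_le
    rw [hW, Module.finrank_baseChange, hV] at hWle
    omega
  obtain ⟨e, he⟩ := exists_linearEquiv_dualContraction
    (dualContraction_injective (span_range_rTensor_algEquiv_eq_top hWx hspan))
    (dualContraction_rTensor_val_mem M w) (hV.trans hMn.symm)
  have hKρ : K = (transposedRegular e).range := SetLike.ext fun φ ↦ by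
    rw [← SetLike.mem_coe, hK, Set.mem_ofPred_eq, hWx,
      Submodule.forall_map_mem_span_singleton_iff (φ.baseChange F'),
      exists_baseChange_eq_smul_iff_mem_range_transposedRegular e he]
  refine ⟨?_, transposedRegular e, transposedRegular_injective e, fun m ↦ ?_⟩
  · rw [hKρ, ← hMn]
    exact (AlgEquiv.ofInjective _ (transposedRegular_injective e)).toLinearEquiv.finrank_eq.symm
  · have : transposedRegular e m ∈ K := hKρ ▸ (transposedRegular e).mem_range_self m
    rwa [← SetLike.mem_coe, hK] at this

/-- `F` characteristic zero, `V` `n`-dimensional, `W ⊆ F' ⊗ V` a line whose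
`Aut(F'/F)`-conjugates span.  If the field of definition `M = F(W)` has `[F(W) : F] = n`,
then the stabilizer `K` of `W` in `End_F(V)` satisfies `[K : F] = n`; i.e. `V` carries a
structure of one-dimensional `F(W)`-vector space (an injective `F`-algebra map
`F(W) → End_F(V)`) under which `W` is stabilized. -/
theorem stabilizer_degree_of_fieldOfDefinition_degree
    (F F' : Type*) [Field F] [CharZero F] [Field F'] [Algebra F F']
    (V : Type*) [AddCommGroup V] [Module F V] [FiniteDimensional F V]
    (n : ℕ) (hV : Module.finrank F V = n)
    (W : Submodule F' (F' ⊗[F] V))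
    (hW : Module.finrank F' ↥W = 1)
    (hspan : Submodule.span F'
      (⋃ σ : F' ≃ₐ[F] F',
        (LinearMap.rTensor V σ.toLinearMap) '' (W : Set (F' ⊗[F] V))) = ⊤)
    (M : IntermediateField F F')
    (hdef : IsDefinedOver F F' V M W)
    (hmin : ∀ M' : IntermediateField F F', IsDefinedOver F F' V M' W → M ≤ M')
    (hMn : Module.finrank F ↥M = n)
    (K : Subalgebra F (Module.End F V))
    (hK : (K : Set (Module.End F V)) =
      {φ : Module.End F V | ∀ x ∈ W, LinearMap.baseChange F' φ x ∈ W}) :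
    Module.finrank F ↥K = n ∧
    ∃ ρ : ↥M →ₐ[F] Module.End F V,
      Function.Injective ρ ∧
      ∀ m : ↥M, ∀ x ∈ W, LinearMap.baseChange F' (ρ m) x ∈ W :=
  stabilizer_degree_of_fieldOfDefinition_degree_general F F' V n hV W hW hspan M hdef hMn K hK
end
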